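/- arXiv:1807.11134 — 3 statements merged into one kernel-verified Lean document; each statement's English description precedes it below -/
import Mathlib

section
/- Let $L$ be a Lie algebra over a field $F$, let $K$ be an ideal of $L$, and let $V$, $W$ be finite-dimensional irreducible $L$-modules such that $K$ acts non-trivially on $V$ and trivially on $W$. Then $K$ acts non-trivially on every composition factor of the $L$-module $V \otimes W$. -/
/-!
Let `A` be the non-unital associative algebra generated by the action of `K` on `V`. As `K` is an
ideal, `A` is normalised by the action of `L`, and the heart of the matter is that `1 ∈ A`.
Granting this, since `K` acts on `V ⊗ W` through `x ↦ x_V ⊗ 1`, the identity of `V ⊗ W` also lies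
in the algebra generated by the action of `K`, so `⁅K, N⁆ = N` for every submodule `N`, and no
nonzero quotient of `N` can be `K`-trivial.

To see `1 ∈ A`, take an idempotent `π ∈ A` with minimal kernel. Every element of the corner
`(1 - π) A (1 - π)` is nilpotent, for otherwise Fitting's lemma would give an idempotent in it
that enlarges `π`. Engel's theorem then yields `0 ≠ z ∈ ker π` killed by the corner, so the
`L`-submodule `{v | A v ⊆ range π}` is nonzero, hence all of `V`; since the ranges of `A` span
the irreducible `V`, `π = 1`.
-/

open scoped TensorProduct

def LieIdealActsTrivially {F L : Type} [Field F] [LieRing L] [LieAlgebra F L]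
    (K : LieIdeal F L) (V : Type) [AddCommGroup V] [LieRingModule L V] : Prop :=
  ∀ x ∈ K, ∀ v : V, ⁅x, v⁆ = 0

open Polynomial LinearMap

attribute [local instance 100] LieRing.ofAssociativeRing

-- With `minpoly F x = X ^ s * q`, `q(0) ≠ 0` and `u * X ^ (s + 1) + w * q = 1`, the idempotent
-- is `u * X ^ (s + 1)`.
theorem exists_isIdempotentElem_aeval_X_mul {F A : Type*} [Field F] [Ring A] [Algebra F A]
    {x : A} (hx : IsIntegral F x) (hnil : ¬IsNilpotent x) :
    ∃ p : F[X], IsIdempotentElem (aeval x (X * p)) ∧ aeval x (X * p) ≠ 0 := by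
  obtain ⟨q, hm, hq⟩ :=
    (minpoly F x).exists_eq_pow_rootMultiplicity_mul_and_not_dvd (minpoly.ne_zero hx) 0
  simp only [map_zero, sub_zero] at hm hq
  set s := (minpoly F x).rootMultiplicity 0
  obtain ⟨u, w, huw⟩ := (irreducible_X.coprime_iff_not_dvd.2 hq).pow_left (m := s + 1)
  have hidem :
      X * (u * X ^ s) * (X * (u * X ^ s)) = X * (u * X ^ s) - u * w * X * minpoly F x := by
    rw [hm]; linear_combination (X * (u * X ^ s)) * huw
  refine ⟨u * X ^ s, ?_, fun h0 => hnil ⟨s, ?_⟩⟩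
  · rw [IsIdempotentElem, ← map_mul, hidem, map_sub, sub_eq_self, map_mul, minpoly.aeval, mul_zero]
  · have hwq := congrArg (aeval x) huw
    rw [map_add, map_one, show u * X ^ (s + 1) = X * (u * X ^ s) by ring, h0, zero_add] at hwq
    calc x ^ s = aeval x (X ^ s * (w * q)) := by rw [map_mul, hwq, mul_one, map_pow, aeval_X]
      _ = aeval x (w * minpoly F x) := by rw [hm]; ring_nf
      _ = 0 := by rw [map_mul, minpoly.aeval, mul_zero]

namespace NonUnitalSubalgebra

variable {R A : Type*} [CommRing R] [Ring A] [Algebra R A]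

lemma aeval_X_mul_mem {S : NonUnitalSubalgebra R A} {x : A} (hx : x ∈ S)
    (p : R[X]) : aeval x (X * p) ∈ S := by
  induction p using Polynomial.induction_on' with
  | add p q hp hq => rw [mul_add, map_add]; exact add_mem hp hq
  | monomial n c =>
    rw [X_mul_monomial, aeval_monomial, ← Algebra.smul_def]
    refine SMulMemClass.smul_mem c ?_
    induction n with
    | zero => simpa using hx
    | succ n ih => rw [pow_succ]; exact mul_mem ih hx

/-- For an idempotent `e ∈ S`, this is the Peirce corner `(1 - e) S (1 - e)`. -/
def peirceCorner (S : NonUnitalSubalgebra R A) (e : A) : NonUnitalSubalgebra R A where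
  carrier := {c | c ∈ S ∧ e * c = 0 ∧ c * e = 0}
  add_mem' := fun ⟨ha, hea, hae⟩ ⟨hb, heb, hbe⟩ =>
    ⟨add_mem ha hb, by rw [mul_add, hea, heb, add_zero], by rw [add_mul, hae, hbe, add_zero]⟩
  zero_mem' := ⟨zero_mem S, mul_zero e, zero_mul e⟩
  mul_mem' := fun ⟨ha, hea, _⟩ ⟨hb, _, hbe⟩ =>
    ⟨mul_mem ha hb, by rw [← mul_assoc, hea, zero_mul], by rw [mul_assoc, hbe, mul_zero]⟩
  smul_mem' := fun r a ⟨ha, hea, hae⟩ =>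
    ⟨SMulMemClass.smul_mem r ha, by rw [mul_smul_comm, hea, smul_zero],
      by rw [smul_mul_assoc, hae, smul_zero]⟩

lemma one_sub_mul_mul_one_sub_mem_peirceCorner {S : NonUnitalSubalgebra R A} {e a : A}
    (heS : e ∈ S) (he : IsIdempotentElem e) (ha : a ∈ S) :
    (1 - e) * a * (1 - e) ∈ S.peirceCorner e := by
  refine ⟨?_, ?_, ?_⟩
  · have : (1 - e) * a * (1 - e) = a - e * a - a * e + e * a * e := by noncomm_ring
    rw [this]
    exact add_mem (sub_mem (sub_mem ha (mul_mem heS ha)) (mul_mem ha heS))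
      (mul_mem (mul_mem heS ha) heS)
  · rw [← mul_assoc, ← mul_assoc, he.mul_one_sub_self, zero_mul, zero_mul]
  · rw [mul_assoc, he.one_sub_mul_self, mul_zero]

end NonUnitalSubalgebra

lemma NonUnitalAlgebra.lie_mem_adjoin {R A : Type*} [CommRing R] [Ring A] [Algebra R A]
    {s : Set A} {d : A} (hs : ∀ a ∈ s, ⁅d, a⁆ ∈ adjoin R s) {a : A} (ha : a ∈ adjoin R s) :
    ⁅d, a⁆ ∈ adjoin R s := by
  induction ha using NonUnitalAlgebra.adjoin_induction with
  | mem a ha => exact hs a ha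
  | add a b _ _ iha ihb => rw [lie_add]; exact add_mem iha ihb
  | zero => rw [lie_zero]; exact zero_mem _
  | mul a b ha hb iha ihb =>
    have : ⁅d, a * b⁆ = ⁅d, a⁆ * b + a * ⁅d, b⁆ := by simp only [Ring.lie_def]; noncomm_ring
    rw [this]; exact add_mem (mul_mem iha hb) (mul_mem ha ihb)
  | smul r a _ ih => rw [lie_smul]; exact SMulMemClass.smul_mem r ih

lemma ker_add_lt_ker_of_mul_eq_zero {R M : Type*} [Ring R] [AddCommGroup M] [Module R M]
    {p e : Module.End R M} (hp : IsIdempotentElem p) (hpe : p * e = 0) (hep : e * p = 0)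
    (he : e ≠ 0) : ker (p + e) < ker p := by
  have hp' (v : M) : p (p v) = p v := LinearMap.congr_fun hp v
  have hpe' (v : M) : p (e v) = 0 := LinearMap.congr_fun hpe v
  have hep' (v : M) : e (p v) = 0 := LinearMap.congr_fun hep v
  refine lt_of_le_of_ne (fun v hv => ?_) fun h => he (LinearMap.ext fun v => ?_)
  · have := congrArg p (mem_ker.1 hv)
    simpa [hp', hpe'] using this
  · have hker : v - p v ∈ ker (p + e) := h ▸ by simp [hp']
    simpa [hp', hpe', hep'] using hker

lemma isNilpotent_of_mem_peirceCorner {F V : Type*} [Field F] [AddCommGroup V] [Module F V]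
    [FiniteDimensional F V] {A : NonUnitalSubalgebra F (Module.End F V)} {π : Module.End F V}
    (hπA : π ∈ A) (hπ : IsIdempotentElem π)
    (hmin : ∀ e ∈ A, IsIdempotentElem e → ¬ker e < ker π) {c : Module.End F V}
    (hc : c ∈ A.peirceCorner π) : IsNilpotent c := by
  by_contra hnil
  obtain ⟨p, he, he0⟩ := exists_isIdempotentElem_aeval_X_mul (IsIntegral.of_finite F c) hnil
  obtain ⟨heA, hπe, heπ⟩ := (A.peirceCorner π).aeval_X_mul_mem hc p
  exact hmin _ (add_mem hπA heA) (hπ.add he (by rw [hπe, heπ, add_zero]))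
    (ker_add_lt_ker_of_mul_eq_zero hπ hπe heπ he0)

theorem NonUnitalSubalgebra.exists_mem_ne_zero_forall_apply_eq_zero_of_isNilpotent
    {F V : Type*} [Field F] [AddCommGroup V] [Module F V] [FiniteDimensional F V]
    (S : NonUnitalSubalgebra F (Module.End F V)) (hS : ∀ a ∈ S, IsNilpotent a)
    (P : Submodule F V) (hP : P ≠ ⊥) (hSP : ∀ a ∈ S, ∀ v ∈ P, a v ∈ P) :
    ∃ z ∈ P, z ≠ 0 ∧ ∀ a ∈ S, a z = 0 := by
  let C : LieSubalgebra F (Module.End F V) :=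
    { S.toSubmodule with
      lie_mem' := fun {a b} (ha : a ∈ S) (hb : b ∈ S) => by
        rw [Ring.lie_def]; exact sub_mem (mul_mem ha hb) (mul_mem hb ha) }
  let P' : LieSubmodule F C V := { P with lie_mem := fun {x} {v} hv => hSP x x.2 v hv }
  have : Nontrivial P' := Submodule.nontrivial_iff_ne_bot.2 hP
  have : LieModule.IsNilpotent C P' :=
    (LieModule.isNilpotent_iff_forall' (R := F)).2 fun x =>
      Module.End.isNilpotent.restrict (fun v hv => hSP x x.2 v hv) (hS x x.2)
  have := LieModule.nontrivial_max_triv_of_isNilpotent F C P'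
  obtain ⟨⟨⟨z, hzP⟩, hz⟩, hz0⟩ := exists_ne (0 : LieModule.maxTrivSubmodule F C P')
  refine ⟨z, hzP, fun h => hz0 (by simp [h]), fun a ha => ?_⟩
  have := congrArg Subtype.val (hz ⟨a, ha⟩)
  simpa using this

lemma LieModule.IsIrreducible.eq_bot_or_eq_top_of_lie_mem {R L M : Type*} [CommRing R]
    [LieRing L] [AddCommGroup M] [Module R M] [LieRingModule L M] (hM : IsIrreducible R L M)
    {p : Submodule R M} (hp : ∀ (x : L) (m : M), m ∈ p → ⁅x, m⁆ ∈ p) : p = ⊥ ∨ p = ⊤ := by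
  rcases hM.eq_bot_or_eq_top ⟨p, hp _ _⟩ with h | h
  · exact .inl (congrArg LieSubmodule.toSubmodule h)
  · exact .inr (congrArg LieSubmodule.toSubmodule h)

section Irreducible

open LieModule

variable {F L V : Type*} [Field F] [LieRing L] [LieAlgebra F L]
  [AddCommGroup V] [Module F V] [LieRingModule L V] [LieModule F L V]

variable {A : NonUnitalSubalgebra F (Module.End F V)}

lemma iSup_range_eq_top_of_isIrreducible (hV : IsIrreducible F L V)
    (hL : ∀ x : L, ∀ a ∈ A, ⁅toEnd F L V x, a⁆ ∈ A) (hA : A ≠ ⊥) :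
    ⨆ a : A, range (a : Module.End F V) = ⊤ := by
  refine (hV.eq_bot_or_eq_top_of_lie_mem fun x v hv => ?_).resolve_left fun h => hA ?_
  · have hle : ⨆ a : A, range (a : Module.End F V) ≤
        (⨆ a : A, range (a : Module.End F V)).comap (toEnd F L V x) :=
      iSup_le fun ⟨a, ha⟩ => by
        rintro _ ⟨u, rfl⟩
        have : ⁅x, a u⁆ = a ⁅x, u⁆ + ⁅toEnd F L V x, a⁆ u := by simp [Ring.lie_def]
        rw [Submodule.mem_comap, toEnd_apply_apply, this]
        exact add_mem (Submodule.mem_iSup_of_mem ⟨a, ha⟩ (mem_range_self a _))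
          (Submodule.mem_iSup_of_mem ⟨_, hL x a ha⟩ (mem_range_self _ u))
    exact hle hv
  · refine eq_bot_iff.2 fun a ha => NonUnitalAlgebra.mem_bot.2 (range_eq_bot.1 ?_)
    exact eq_bot_iff.2 (h ▸ le_iSup (fun a : A => range (a : Module.End F V)) ⟨a, ha⟩)

lemma range_le_range_of_isIrreducible [FiniteDimensional F V] (hV : IsIrreducible F L V)
    (hL : ∀ x : L, ∀ a ∈ A, ⁅toEnd F L V x, a⁆ ∈ A) {π : Module.End F V} (hπA : π ∈ A)
    (hπ : IsIdempotentElem π) (hnil : ∀ c ∈ A.peirceCorner π, IsNilpotent c)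
    (hker : ker π ≠ ⊥) {a : Module.End F V} (ha : a ∈ A) : range a ≤ range π := by
  obtain ⟨z, hzπ, hz0, hz⟩ :=
    (A.peirceCorner π).exists_mem_ne_zero_forall_apply_eq_zero_of_isNilpotent hnil (ker π) hker
      fun c hc v _ => LinearMap.congr_fun hc.2.1 v
  let Z : Submodule F V := ⨅ b : A, (range π).comap (b : Module.End F V)
  have hmemZ {v : V} : v ∈ Z ↔ ∀ b ∈ A, π (b v) = b v := by
    simp [Z, Submodule.mem_iInf, hπ.mem_range_iff]
  have hzZ : z ∈ Z := hmemZ.2 fun b hb => by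
    have hσz : (1 - π) z = z := by simp [mem_ker.1 hzπ]
    have := hz _ (NonUnitalSubalgebra.one_sub_mul_mul_one_sub_mem_peirceCorner hπA hπ hb)
    rw [Module.End.mul_apply, hσz, Module.End.mul_apply, LinearMap.sub_apply,
      Module.End.one_apply, sub_eq_zero] at this
    exact this.symm
  have hZ : Z = ⊤ := by
    refine (hV.eq_bot_or_eq_top_of_lie_mem fun x v hv => hmemZ.2 fun b hb => ?_).resolve_left
      fun h => hz0 ((Submodule.mem_bot F).1 (h ▸ hzZ))
    have hbv := hmemZ.1 hv b hb
    have h1 := hmemZ.1 hv _ (hL x b hb)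
    have h2 := hmemZ.1 hv _ (mul_mem (hL x π hπA) hb)
    have hππ (u : V) : π (π u) = π u := LinearMap.congr_fun hπ.eq u
    simp only [Ring.lie_def, Module.End.mul_apply, LinearMap.sub_apply, map_sub, hbv, hππ,
      sub_self, toEnd_apply_apply] at h1 h2 ⊢
    rw [eq_comm, sub_eq_zero] at h2
    rwa [← h2, sub_right_inj] at h1
  rintro _ ⟨v, rfl⟩
  exact hπ.mem_range_iff.2 (hmemZ.1 (hZ ▸ Submodule.mem_top) a ha)

theorem one_mem_of_isIrreducible [FiniteDimensional F V] (hV : IsIrreducible F L V)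
    (hL : ∀ x : L, ∀ a ∈ A, ⁅toEnd F L V x, a⁆ ∈ A) (hA : A ≠ ⊥) : 1 ∈ A := by
  obtain ⟨π, ⟨hπA, hπ⟩, hmin⟩ := (InvImage.wf (fun e : Module.End F V => ker e)
    wellFounded_lt).has_min {e | e ∈ A ∧ IsIdempotentElem e} ⟨0, zero_mem A, .zero⟩
  have hnil (c) (hc : c ∈ A.peirceCorner π) : IsNilpotent c :=
    isNilpotent_of_mem_peirceCorner hπA hπ (fun e he he' => hmin e ⟨he, he'⟩) hc
  have hrange : range π = ⊤ := by
    by_cases hker : ker π = ⊥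
    · exact eq_top_of_isCompl_bot (hker ▸ hπ.isCompl)
    · rw [eq_top_iff, ← iSup_range_eq_top_of_isIrreducible hV hL hA]
      exact iSup_le fun a => range_le_range_of_isIrreducible hV hL hπA hπ hnil hker a.2
  have : π = 1 := LinearMap.ext fun v => hπ.mem_range_iff.1 (hrange ▸ Submodule.mem_top)
  exact this ▸ hπA

end Irreducible

theorem LieSubmodule.lie_eq_self_of_one_mem_adjoin {R L M : Type*} [CommRing R] [LieRing L]
    [LieAlgebra R L] [AddCommGroup M] [Module R M] [LieRingModule L M] [LieModule R L M]
    {K : LieIdeal R L} (h1 : 1 ∈ NonUnitalAlgebra.adjoin R (LieModule.toEnd R L M '' K))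
    (N : LieSubmodule R L M) : ⁅K, N⁆ = N := by
  refine le_antisymm (lie_le_right N K) fun m hm => ?_
  suffices ∀ a ∈ NonUnitalAlgebra.adjoin R (LieModule.toEnd R L M '' K), ∀ m ∈ N, a m ∈ ⁅K, N⁆
    from this 1 h1 m hm
  intro a ha
  induction ha using NonUnitalAlgebra.adjoin_induction with
  | mem _ h => obtain ⟨x, hx, rfl⟩ := h; exact fun m hm => lie_mem_lie hx hm
  | add _ _ _ _ iha ihb => exact fun m hm => add_mem (iha m hm) (ihb m hm)
  | zero => exact fun _ _ => zero_mem _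
  | mul _ _ _ _ iha ihb => exact fun m hm => iha _ (lie_le_right N K (ihb m hm))
  | smul r _ _ ih => exact fun m hm => SMulMemClass.smul_mem r (ih m hm)

section Ideal

open LieModule

variable {F L : Type} [Field F] [LieRing L] [LieAlgebra F L] (K : LieIdeal F L)
  {V W : Type} [AddCommGroup V] [Module F V] [LieRingModule L V] [LieModule F L V]
  [AddCommGroup W] [Module F W] [LieRingModule L W] [LieModule F L W]

theorem one_mem_adjoin_toEnd_image_of_isIrreducible [FiniteDimensional F V]
    (hV : IsIrreducible F L V) (hKV : ¬LieIdealActsTrivially K V) :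
    1 ∈ NonUnitalAlgebra.adjoin F (toEnd F L V '' K) := by
  refine one_mem_of_isIrreducible hV (fun x a ha => NonUnitalAlgebra.lie_mem_adjoin ?_ ha) ?_
  · rintro _ ⟨y, hy, rfl⟩
    rw [← (toEnd F L V).map_lie]
    exact NonUnitalAlgebra.subset_adjoin F ⟨_, K.lie_mem hy, rfl⟩
  · refine fun h => hKV fun x hx v => ?_
    have : toEnd F L V x ∈ (⊥ : NonUnitalSubalgebra F (Module.End F V)) :=
      h ▸ NonUnitalAlgebra.subset_adjoin F ⟨x, hx, rfl⟩
    rw [NonUnitalAlgebra.mem_bot] at this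
    rw [← toEnd_apply_apply F, this, LinearMap.zero_apply]

lemma toEnd_tensor_eq_rTensor {x : L} (hx : ∀ w : W, ⁅x, w⁆ = 0) :
    toEnd F L (V ⊗[F] W) x = (toEnd F L V x).rTensor W :=
  TensorProduct.ext' fun v w => by simp [TensorProduct.LieModule.lie_tmul_right, hx]

theorem one_mem_adjoin_toEnd_image_tensor
    (h1 : 1 ∈ NonUnitalAlgebra.adjoin F (toEnd F L V '' K)) (hKW : LieIdealActsTrivially K W) :
    1 ∈ NonUnitalAlgebra.adjoin F (toEnd F L (V ⊗[F] W) '' K) := by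
  have : toEnd F L (V ⊗[F] W) '' K = Module.End.rTensorAlgHom F V W '' (toEnd F L V '' K) := by
    rw [Set.image_image]
    exact Set.image_congr fun x hx => toEnd_tensor_eq_rTensor (hKW x hx)
  rw [this, ← NonUnitalAlgHom.map_adjoin]
  exact ⟨1, h1, map_one (Module.End.rTensorAlgHom F V W)⟩

end Ideal

/-- A composition factor of `V ⊗ W` is encoded as an irreducible `U` with a surjection from a
submodule `N` of `V ⊗ W`; in finite dimension these are exactly the irreducible subquotients. -/
theorem acts_nontrivially_on_composition_factors_of_tensor_general
    {F L : Type} [Field F] [LieRing L] [LieAlgebra F L]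
    (K : LieIdeal F L)
    (V W : Type) [AddCommGroup V] [Module F V] [LieRingModule L V] [LieModule F L V]
    [AddCommGroup W] [Module F W] [LieRingModule L W] [LieModule F L W]
    [FiniteDimensional F V]
    (hV : LieModule.IsIrreducible F L V)
    (hKV : ¬ LieIdealActsTrivially K V) (hKW : LieIdealActsTrivially K W)
    (U : Type) [AddCommGroup U] [Module F U] [LieRingModule L U] [LieModule F L U]
    (hU : LieModule.IsIrreducible F L U)
    (N : LieSubmodule F L (V ⊗[F] W)) (f : N →ₗ⁅F,L⁆ U) (hf : Function.Surjective f) :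
    ¬ LieIdealActsTrivially K U := by
  intro hKU
  have h1 := one_mem_adjoin_toEnd_image_tensor K
    (one_mem_adjoin_toEnd_image_of_isIrreducible K hV hKV) hKW
  have hN : ⁅K, (⊤ : LieSubmodule F L N)⁆ = ⊤ :=
    LieSubmodule.map_injective_of_injective N.injective_incl <| by
      rw [LieSubmodule.map_bracket_eq, LieSubmodule.map_incl_top,
        LieSubmodule.lie_eq_self_of_one_mem_adjoin h1]
  have hfK : ⁅K, (⊤ : LieSubmodule F L U)⁆ = ⊤ := by
    rw [← f.range_eq_top.2 hf, ← LieModuleHom.map_top, ← LieSubmodule.map_bracket_eq, hN]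
  have hK0 : ⁅K, (⊤ : LieSubmodule F L U)⁆ = ⊥ :=
    (LieSubmodule.lie_eq_bot_iff (I := K) (N := ⊤)).2 fun x hx u _ => hKU x hx u
  exact hU.bot_ne_top (hK0.symm.trans hfK)

/-- Let `K` be an ideal of `L` and `V`, `W` finite-dimensional irreducible
`L`-modules with `K` acting non-trivially on `V` and trivially on `W`.  Then `K` acts
non-trivially on every composition factor of `V ⊗ W`.  (In a finite-dimensional module the
composition factors are exactly the irreducible `L`-module quotients of submodules, so a
composition factor is rendered as an irreducible module `U` admitting a surjective
`L`-module map from a submodule `N` of `V ⊗ W`.) -/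
theorem acts_nontrivially_on_composition_factors_of_tensor
    {F L : Type} [Field F] [LieRing L] [LieAlgebra F L]
    (K : LieIdeal F L)
    (V W : Type) [AddCommGroup V] [Module F V] [LieRingModule L V] [LieModule F L V]
    [AddCommGroup W] [Module F W] [LieRingModule L W] [LieModule F L W]
    [FiniteDimensional F V] [FiniteDimensional F W]
    (hV : LieModule.IsIrreducible F L V) (hW : LieModule.IsIrreducible F L W)
    (hKV : ¬ LieIdealActsTrivially K V) (hKW : LieIdealActsTrivially K W)
    (U : Type) [AddCommGroup U] [Module F U] [LieRingModule L U] [LieModule F L U]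
    (hU : LieModule.IsIrreducible F L U)
    (N : LieSubmodule F L (V ⊗[F] W)) (f : N →ₗ⁅F,L⁆ U) (hf : Function.Surjective f) :
    ¬ LieIdealActsTrivially K U :=
  acts_nontrivially_on_composition_factors_of_tensor_general K V W hV hKV hKW U hU N f hf
end

section
/- Let $L$ be a finite-dimensional Lie algebra over an algebraically closed field $F$ of characteristic $p \ne 0$. Suppose $V$ is a faithful irreducible $L$-module, and let $A_1, \dots, A_r$ be pairwise isomorphic abelian minimal ideals of $L$ (as $L$-modules, via isomorphisms $\phi_i : A_1 \to A_i$) whose sum is direct, chosen with $r$ maximal. Then $r \leq \dim_F(A_1)$. -/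
/-!
The sum `S` of the `A i` is abelian (`⁅A i, A j⁆ ≤ A i ⊓ A j = 0` for `i ≠ j`), so by
triangularizability `V` contains a common eigenvector `v` of `S`, with eigenvalue functional `χ`.
The functionals `c i = χ ∘ φ i` on `A 0` are linearly independent: if `∑ g i • c i = 0`, then
`∑ g i • φ i` is an `L`-module map into `S` whose image is an ideal `I` annihilating `v`. The
vectors killed by `I` form a nonzero submodule, hence all of `V`, so faithfulness gives `I = 0`;
evaluating at a nonzero `a` and using that the sum of the `A i` is direct gives `g = 0`.
Hence `r ≤ dim (A 0)^* = dim A 0`.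
-/

namespace LieIdeal

variable {R L M : Type*} [CommRing R] [LieRing L] [LieAlgebra R L]
  [AddCommGroup M] [Module R M] [LieRingModule L M] [LieModule R L M]

variable (M) in
def invariants (I : LieIdeal R L) : LieSubmodule R L M where
  carrier := {m | ∀ x ∈ I, ⁅x, m⁆ = 0}
  add_mem' hm hn x hx := by rw [lie_add, hm x hx, hn x hx, add_zero]
  zero_mem' x _ := lie_zero x
  smul_mem' t m hm x hx := by rw [lie_smul, hm x hx, smul_zero]
  lie_mem {y m} hm x hx := by
    rw [leibniz_lie, hm x hx, hm _ (lie_mem_left R L I x y hx), lie_zero, zero_add]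

theorem mem_invariants {I : LieIdeal R L} {m : M} :
    m ∈ I.invariants M ↔ ∀ x ∈ I, ⁅x, m⁆ = 0 :=
  Iff.rfl

theorem eq_bot_of_forall_lie_eq_zero [LieModule.IsIrreducible R L M]
    (hfaithful : Function.Injective (LieModule.toEnd R L M)) {I : LieIdeal R L} {v : M}
    (hv : v ≠ 0) (hI : ∀ x ∈ I, ⁅x, v⁆ = 0) : I = ⊥ := by
  have htop : I.invariants M = ⊤ :=
    (IsSimpleOrder.eq_bot_or_eq_top _).resolve_left fun h ↦
      hv <| (LieSubmodule.mem_bot v).mp (h ▸ mem_invariants.mpr hI)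
  refine (LieSubmodule.eq_bot_iff I).mpr fun x hx ↦ hfaithful ?_
  ext m
  simpa using mem_invariants.mp (htop ▸ LieSubmodule.mem_top m) x hx

theorem lie_eq_zero_of_mem_iSup {ι : Type*} {A : ι → LieIdeal R L}
    (habelian : ∀ i, ∀ a ∈ A i, ∀ b ∈ A i, ⁅a, b⁆ = 0) (hindep : iSupIndep A)
    {x y : L} (hx : x ∈ ⨆ i, A i) (hy : y ∈ ⨆ i, A i) : ⁅x, y⁆ = 0 := by
  have hpair : ∀ i j, ∀ a ∈ A i, ∀ b ∈ A j, ⁅a, b⁆ = 0 := by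
    intro i j a ha b hb
    rcases eq_or_ne i j with rfl | hij
    · exact habelian i a ha b hb
    have hmem : ⁅a, b⁆ ∈ A i ⊓ A j :=
      LieSubmodule.lie_le_inf (A i) (A j) (LieSubmodule.lie_mem_lie ha hb)
    rwa [(hindep.pairwiseDisjoint hij).eq_bot, LieSubmodule.mem_bot] at hmem
  induction hx using LieSubmodule.iSup_induction' with
  | mem i a ha =>
    induction hy using LieSubmodule.iSup_induction' with
    | mem j b hb => exact hpair i j a ha b hb
    | zero => exact lie_zero a
    | add b b' _ _ hb hb' => rw [lie_add, hb, hb', add_zero]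
  | zero => exact zero_lie y
  | add a a' _ _ ha ha' => rw [add_lie, ha, ha', add_zero]

theorem isLieAbelian_iSup {ι : Type*} {A : ι → LieIdeal R L}
    (habelian : ∀ i, ∀ a ∈ A i, ∀ b ∈ A i, ⁅a, b⁆ = 0) (hindep : iSupIndep A) :
    IsLieAbelian ↥(⨆ i, A i) where
  trivial x y := Subtype.ext <| lie_eq_zero_of_mem_iSup habelian hindep x.2 y.2

end LieIdeal

namespace LieModuleHom

variable {R L M N : Type*} [CommRing R] [LieRing L]
  [AddCommGroup M] [Module R M] [LieRingModule L M]
  [AddCommGroup N] [Module R N] [LieRingModule L N]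

theorem sum_apply {ι : Type*} (s : Finset ι) (f : ι → N →ₗ⁅R,L⁆ M) (n : N) :
    (∑ i ∈ s, f i) n = ∑ i ∈ s, f i n :=
  map_sum (AddMonoidHom.mk' (fun f : N →ₗ⁅R,L⁆ M ↦ f n) fun _ _ ↦ rfl) f s

variable [LieAlgebra R L] [LieModule R L M]

theorem eq_zero_of_forall_character_apply_eq_zero [LieModule.IsIrreducible R L M]
    (hfaithful : Function.Injective (LieModule.toEnd R L M)) {S : LieIdeal R L}
    {χ : S →ₗ[R] R} {v : M} (hv0 : v ≠ 0) (hv : ∀ x : S, ⁅x, v⁆ = χ x • v)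
    (f : N →ₗ⁅R,L⁆ S) (hf : ∀ n, χ (f n) = 0) : f = 0 := by
  have hrange : ((LieSubmodule.incl S).comp f).range = ⊥ := by
    refine LieIdeal.eq_bot_of_forall_lie_eq_zero hfaithful hv0 fun x hx ↦ ?_
    obtain ⟨n, rfl⟩ := (LieModuleHom.mem_range _ x).mp hx
    simpa [hf] using hv (f n)
  ext n
  have hn : (f n : L) ∈ ((LieSubmodule.incl S).comp f).range := ⟨n, rfl⟩
  simpa [hrange] using hn

end LieModuleHom

theorem multiplicity_le_dim_of_faithful_irreducible_general
    {F L : Type} [Field F] [IsAlgClosed F] [LieRing L] [LieAlgebra F L] [FiniteDimensional F L]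
    (V : Type) [AddCommGroup V] [Module F V] [LieRingModule L V] [LieModule F L V]
    [FiniteDimensional F V]
    (hV : LieModule.IsIrreducible F L V)
    (hfaithful : Function.Injective (LieModule.toEnd F L V))
    (r : ℕ) (hr : 0 < r) (A : Fin r → LieIdeal F L)
    (hmin : ∀ i, IsAtom (A i))
    (habelian : ∀ i, ∀ a ∈ A i, ∀ b ∈ A i, ⁅a, b⁆ = (0 : L))
    (hindep : iSupIndep A)
    (φ : ∀ i, (↥(A ⟨0, hr⟩) ≃ₗ⁅F,L⁆ ↥(A i))) :
    r ≤ Module.finrank F ↥(A ⟨0, hr⟩) := by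
  have := LieModule.nontrivial_of_isIrreducible F L V
  set S : LieIdeal F L := ⨆ i, A i
  have : IsLieAbelian S := LieIdeal.isLieAbelian_iSup habelian hindep
  obtain ⟨χ, hχ⟩ := LieModule.exists_nontrivial_weightSpace_of_isNilpotent F S V
  obtain ⟨⟨v, hv⟩, hv0⟩ := exists_ne (0 : LieModule.weightSpace V χ)
  let ψ i : A ⟨0, hr⟩ →ₗ⁅F,L⁆ S := (LieSubmodule.inclusion (le_iSup A i)).comp (φ i)
  let c i : Module.Dual F (A ⟨0, hr⟩) := χ ∘ₗ (ψ i : A ⟨0, hr⟩ →ₗ[F] S)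
  suffices LinearIndependent F c by simpa using this.fintype_card_le_finrank
  have := (LieSubmodule.nontrivial_iff_ne_bot F L L).mpr (hmin ⟨0, hr⟩).1
  obtain ⟨a, ha⟩ := exists_ne (0 : A ⟨0, hr⟩)
  have hφa : LinearIndependent F fun i ↦ (φ i a : L) :=
    (LieSubmodule.iSupIndep_toSubmodule.mpr hindep).linearIndependent _ (fun i ↦ (φ i a).2)
      fun i ↦ by simpa using ha
  rw [Fintype.linearIndependent_iff] at hφa ⊢
  intro g hg
  have hψ : ∑ i, g i • ψ i = 0 := by
    refine LieModuleHom.eq_zero_of_forall_character_apply_eq_zero hfaithful (v := v)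
      (by simpa using hv0) ((LieModule.mem_weightSpace _ _).mp hv) _ fun x ↦ ?_
    simpa [c, LieModuleHom.sum_apply] using LinearMap.congr_fun hg x
  refine hφa g ?_
  simpa [ψ, LieModuleHom.sum_apply] using congr_arg (fun f ↦ ((f a : S) : L)) hψ

/-- Let `L` be a finite-dimensional Lie algebra over an algebraically
closed field of characteristic `p ≠ 0`, let `V` be a faithful irreducible `L`-module,
and let `A 0, …, A (r-1)` be pairwise isomorphic abelian minimal ideals (via `L`-module
isomorphisms `φ i : A 0 ≃ A i`) whose sum is direct, with `r` maximal.  Then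
`r ≤ dim_F (A 0)`. -/
theorem multiplicity_le_dim_of_faithful_irreducible
    {F L : Type} [Field F] [IsAlgClosed F] [LieRing L] [LieAlgebra F L] {p : ℕ}
    [CharP F p] (hp : p ≠ 0) [FiniteDimensional F L]
    (V : Type) [AddCommGroup V] [Module F V] [LieRingModule L V] [LieModule F L V]
    [FiniteDimensional F V]
    (hV : LieModule.IsIrreducible F L V)
    (hfaithful : Function.Injective (LieModule.toEnd F L V))
    (r : ℕ) (hr : 0 < r) (A : Fin r → LieIdeal F L)
    (hmin : ∀ i, IsAtom (A i))
    (habelian : ∀ i, ∀ a ∈ A i, ∀ b ∈ A i, ⁅a, b⁆ = (0 : L))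
    (hindep : iSupIndep A)
    (φ : ∀ i, (↥(A ⟨0, hr⟩) ≃ₗ⁅F,L⁆ ↥(A i)))
    (hmax : ∀ B : LieIdeal F L, IsAtom B → Nonempty (↥B ≃ₗ⁅F,L⁆ ↥(A ⟨0, hr⟩)) →
      ¬ Disjoint B (⨆ i, A i)) :
    r ≤ Module.finrank F ↥(A ⟨0, hr⟩) :=
  multiplicity_le_dim_of_faithful_irreducible_general V hV hfaithful r hr A hmin habelian hindep φ
end

section
/- Let $L$ be a finite-dimensional Lie algebra over an algebraically closed field $F$ of characteristic $p \ne 0$ satisfying: for each abelian minimal ideal $A$, the multiplicity of the isomorphism type of $A$ is at most $\dim_F A$. Let $L^e$ be a minimal $p$-envelope of $L$. Then every minimal ideal of $L^e$ is contained in $L$, and $L^e$ also satisfies the same multiplicity condition. -/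
/-- A `p`-operation making `L` a restricted Lie algebra (Jacobson's formula is encoded as
additivity of `x ↦ ι(x)^p - ι(x^[p])` in the universal enveloping algebra). -/
structure POperation (F L : Type) [Field F] [LieRing L] [LieAlgebra F L] (p : ℕ) where
  pOp : L → L
  ad_pow : ∀ x : L, (LieAlgebra.ad F L x) ^ p = LieAlgebra.ad F L (pOp x)
  smul_pow : ∀ (t : F) (x : L), pOp (t • x) = t ^ p • pOp x
  jacobson : ∀ x y : L,
    (UniversalEnvelopingAlgebra.ι F (x + y)) ^ p
        - UniversalEnvelopingAlgebra.ι F (pOp (x + y)) =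
      ((UniversalEnvelopingAlgebra.ι F x) ^ p - UniversalEnvelopingAlgebra.ι F (pOp x)) +
        ((UniversalEnvelopingAlgebra.ι F y) ^ p - UniversalEnvelopingAlgebra.ι F (pOp y))

/-- A `p`-envelope of the Lie algebra `L`: a finite-dimensional restricted Lie algebra
containing (a copy of) `L` as an ideal, generated as a restricted algebra by `L`. -/
structure PEnvelope (F L : Type) [Field F] [LieRing L] [LieAlgebra F L] (p : ℕ) where
  env : Type
  [isLieRing : LieRing env]
  [isLieAlgebra : LieAlgebra F env]
  finDim : FiniteDimensional F env
  pstruct : POperation F env p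
  E : LieIdeal F env
  iso : L ≃ₗ⁅F⁆ ↥E
  generates : ∀ S : LieSubalgebra F env, (E : LieSubalgebra F env) ≤ S →
    (∀ x ∈ S, pstruct.pOp x ∈ S) → S = ⊤

attribute [instance] PEnvelope.isLieRing PEnvelope.isLieAlgebra

/-- The multiplicity condition on a Lie algebra: whenever `A 0, …, A (r-1)` are pairwise
isomorphic abelian minimal ideals whose sum is direct, `r ≤ dim_F (A 0)`. -/
def MultiplicityCondition (F M : Type) [Field F] [LieRing M] [LieAlgebra F M] : Prop :=
  ∀ (r : ℕ) (hr : 0 < r) (A : Fin r → LieIdeal F M),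
    (∀ i, IsAtom (A i)) →
    (∀ i, ∀ a ∈ A i, ∀ b ∈ A i, ⁅a, b⁆ = (0 : M)) →
    iSupIndep A →
    (∀ i, Nonempty (↥(A ⟨0, hr⟩) ≃ₗ⁅F,M⁆ ↥(A i))) →
    r ≤ Module.finrank F ↥(A ⟨0, hr⟩)

/-!
If a minimal ideal `B` of a minimal `p`-envelope `Lᵉ` is not contained in `L`, then `B ∩ L = 0`,
and since `[Lᵉ, Lᵉ] ⊆ L` the ideal `B` is central. A complement `C` of `Z(Lᵉ) ∩ L` in `Z(Lᵉ)` is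
then a nonzero central ideal meeting `L` trivially, and `Lᵉ / C`, with the `p`-map transported
along a linear section of the quotient map, is a smaller `p`-envelope of `L`.

Hence the minimal ideals of `Lᵉ` lie in `L`. A subspace of `L` stable under `ad L` is stable
under the restricted subalgebra generated by `L`, which is `Lᵉ`; so the ideals of `Lᵉ` inside `L`
are exactly the ideals of `L`, and the multiplicity condition passes from `L` to `Lᵉ`.
-/

open LieAlgebra

section

variable {F M N : Type} [Field F] [LieRing M] [LieAlgebra F M] [LieRing N] [LieAlgebra F N]

lemma LieHom.map_ad_pow_apply (f : M →ₗ⁅F⁆ N) (x y : M) (n : ℕ) :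
    f ((ad F M x ^ n) y) = (ad F N (f x) ^ n) (f y) := by
  induction n generalizing y with
  | zero => rfl
  | succ n ih =>
    rw [pow_succ, pow_succ, Module.End.mul_apply, Module.End.mul_apply, ad_apply, ad_apply, ih,
      f.map_lie]

def LieIdeal.quotientMk (I : LieIdeal F M) : M →ₗ⁅F⁆ M ⧸ I :=
  { (I : Submodule F M).mkQ with map_lie' := fun {x y} => LieSubmodule.Quotient.mk_bracket I x y }

lemma LieIdeal.quotientMk_eq_zero {I : LieIdeal F M} {x : M} : I.quotientMk x = 0 ↔ x ∈ I :=
  Submodule.Quotient.mk_eq_zero _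

lemma LieIdeal.quotientMk_surjective (I : LieIdeal F M) : Function.Surjective I.quotientMk :=
  Submodule.Quotient.mk_surjective _

noncomputable def LieIdeal.equivMapOfSurjective {f : M →ₗ⁅F⁆ N} (hf : Function.Surjective f)
    (I : LieIdeal F M) (hI : ∀ x ∈ I, f x = 0 → x = 0) : I ≃ₗ⁅F⁆ I.map f :=
  LieEquiv.ofBijective
    { toFun := fun x => ⟨f x, LieIdeal.mem_map x.2⟩
      map_add' := fun x y => Subtype.ext (f.map_add x y)
      map_smul' := fun t x => Subtype.ext (f.map_smul t x)
      map_lie' := fun {x y} => Subtype.ext (f.map_lie x y) }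
    ⟨fun x y hxy => by
      have : f (x - y) = 0 := by rw [map_sub, sub_eq_zero]; exact congrArg Subtype.val hxy
      exact sub_eq_zero.mp (Subtype.ext (hI _ (x - y).2 this)),
    fun ⟨y, hy⟩ => by
      obtain ⟨x, rfl⟩ := LieIdeal.mem_map_of_surjective hf hy
      exact ⟨x, rfl⟩⟩

lemma LieIdeal.exists_central_complement (I : LieIdeal F M) :
    ∃ C : LieIdeal F M, C ≤ center F M ∧ Disjoint C I ∧ center F M ≤ C ⊔ I := by
  let Z : Submodule F M := center F M
  obtain ⟨C₀, hC₀⟩ := Submodule.exists_isCompl (Z ⊓ I)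
  let C : LieIdeal F M :=
    { toSubmodule := C₀ ⊓ Z
      lie_mem := fun {x m} hm => by
        rw [(LieModule.mem_maxTrivSubmodule F M M m).mp hm.2 x]
        exact (C₀ ⊓ Z).zero_mem }
  refine ⟨C, fun c hc => hc.2, ?_, fun z hz => ?_⟩
  · rw [← LieSubmodule.disjoint_toSubmodule, Submodule.disjoint_def]
    intro c hc hcI
    exact (Submodule.disjoint_def.mp hC₀.disjoint) c ⟨hc.2, hcI⟩ hc.1
  · obtain ⟨x, hx, c, hc, rfl⟩ :=
      Submodule.mem_sup.mp (hC₀.sup_eq_top ▸ Submodule.mem_top : z ∈ Z ⊓ I ⊔ C₀)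
    have hcZ : c ∈ Z := by simpa using Z.sub_mem hz hx.1
    exact (LieSubmodule.mem_sup _ _ _).mpr ⟨c, ⟨hc, hcZ⟩, x, hx.2, add_comm c x⟩

end

namespace POperation

variable {F M N : Type} [Field F] [LieRing M] [LieAlgebra F M] [LieRing N] [LieAlgebra F N]
  {p : ℕ}

lemma pOp_lie (P : POperation F M p) (x y : M) : ⁅P.pOp x, y⁆ = (ad F M x ^ p) y := by
  rw [P.ad_pow]; rfl

lemma pOp_sub_mem_center (P : POperation F M p) {x y : M} (h : x - y ∈ center F M) :
    P.pOp x - P.pOp y ∈ center F M := by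
  have had : ad F M x = ad F M y := by
    ext w
    have := (LieModule.mem_maxTrivSubmodule F M M _).mp h w
    rw [lie_sub, sub_eq_zero] at this
    rw [ad_apply, ad_apply, ← lie_skew, this, lie_skew]
  rw [LieModule.mem_maxTrivSubmodule]
  intro w
  rw [lie_sub, ← lie_skew w (P.pOp x), ← lie_skew w (P.pOp y), P.pOp_lie, P.pOp_lie, had,
    sub_self]

section

open UniversalEnvelopingAlgebra

attribute [local instance 100] LieRing.ofAssociativeRing

def ofSection (P : POperation F M p) (f : M →ₗ⁅F⁆ N) (s : N →ₗ[F] M)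
    (hs : ∀ q, f (s q) = q) : POperation F N p where
  pOp q := f (P.pOp (s q))
  ad_pow q := by
    ext u
    rw [← hs u, ← hs q, ← f.map_ad_pow_apply, ad_apply, ← f.map_lie, hs, P.ad_pow]; rfl
  smul_pow t q := by rw [map_smul, P.smul_pow, map_smul]
  jacobson q q' := by
    have hι : ∀ x, lift F ((ι F).comp f) (ι F x) = ι F (f x) := fun x => by
      rw [lift_ι_apply]; rfl
    simpa only [map_add, map_sub, map_pow, hι, hs] using
      congrArg (lift F ((ι F).comp f)) (P.jacobson (s q) (s q'))

end

end POperation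

namespace PEnvelope

variable {F L : Type} [Field F] [LieRing L] [LieAlgebra F L] {p : ℕ} (Le : PEnvelope F L p)

lemma lie_mem_of_forall_lie_mem {J : Submodule F Le.env} (hJ : ∀ e ∈ Le.E, ∀ j ∈ J, ⁅e, j⁆ ∈ J)
    (x : Le.env) {j : Le.env} (hj : j ∈ J) : ⁅x, j⁆ ∈ J := by
  let S : LieSubalgebra F Le.env :=
    { carrier := {x | ∀ j ∈ J, ⁅x, j⁆ ∈ J}
      add_mem' := fun ha hb j hj => by rw [add_lie]; exact add_mem (ha j hj) (hb j hj)
      zero_mem' := fun j _ => by rw [zero_lie]; exact zero_mem _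
      smul_mem' := fun t a ha j hj => by rw [smul_lie]; exact J.smul_mem t (ha j hj)
      lie_mem' := fun ha hb j hj => by
        rw [lie_lie]; exact sub_mem (ha _ (hb _ hj)) (hb _ (ha _ hj)) }
  have hS : S = ⊤ := Le.generates S (fun e he => hJ e he) fun z hz j hj => by
    rw [Le.pstruct.pOp_lie]
    exact Module.End.pow_apply_mem_of_forall_mem p (fun j hj => hz j hj) j hj
  exact (hS ▸ LieSubalgebra.mem_top x : x ∈ S) j hj

lemma lie_mem_E (hp : p ≠ 0) (x y : Le.env) : ⁅x, y⁆ ∈ Le.E := by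
  let S := LieIdeal.toLieSubalgebra F Le.env Le.E.normalizer
  have hS : S = ⊤ := Le.generates S (LieSubmodule.le_normalizer Le.E) fun z hz => by
    simp only [S, LieIdeal.mem_toLieSubalgebra, LieSubmodule.mem_normalizer] at hz ⊢
    intro y
    obtain ⟨q, rfl⟩ := Nat.exists_eq_succ_of_ne_zero hp
    rw [← lie_skew, Le.pstruct.pOp_lie, pow_succ, Module.End.mul_apply]
    refine neg_mem (Module.End.pow_apply_mem_of_forall_mem q (fun e he => ?_) _ ?_)
    · exact Le.E.lie_mem he
    · rw [ad_apply, ← lie_skew]; exact neg_mem (hz y)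
  have hx : x ∈ S := hS ▸ LieSubalgebra.mem_top x
  rw [← lie_skew]
  exact neg_mem (by simpa [S] using hx y)

section Quotient

variable {C : LieIdeal F Le.env} (s : Le.env ⧸ C →ₗ[F] Le.env)
  (hs : ∀ q, C.quotientMk (s q) = q)

lemma quotient_generates (hC : C ≤ center F Le.env) (hZ : center F Le.env ≤ C ⊔ Le.E)
    (S : LieSubalgebra F (Le.env ⧸ C)) (hES : (Le.E.map C.quotientMk : LieSubalgebra F _) ≤ S)
    (hPS : ∀ x ∈ S, (Le.pstruct.ofSection C.quotientMk s hs).pOp x ∈ S) : S = ⊤ := by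
  have hE : ∀ e ∈ Le.E, C.quotientMk e ∈ S := fun e he => hES (LieIdeal.mem_map he)
  have hpre : S.comap C.quotientMk = ⊤ := by
    refine Le.generates _ (fun e he => hE e he) fun x hx => ?_
    have hxs : x - s (C.quotientMk x) ∈ center F Le.env :=
      hC (LieIdeal.quotientMk_eq_zero.mp (by rw [map_sub, hs, sub_self]))
    -- the two `p`-maps differ by a central element, and `Z(Lᵉ) ⊆ C ⊔ E`
    obtain ⟨c, hc, e, he, hce⟩ := (LieSubmodule.mem_sup _ _ _).mp
      (hZ (Le.pstruct.pOp_sub_mem_center hxs))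
    have hdecomp : Le.pstruct.pOp x = Le.pstruct.pOp (s (C.quotientMk x)) + c + e := by
      rw [add_assoc, hce, add_sub_cancel]
    change C.quotientMk (Le.pstruct.pOp x) ∈ S
    rw [hdecomp, map_add, map_add, LieIdeal.quotientMk_eq_zero.mpr hc, add_zero]
    exact S.add_mem (hPS _ hx) (hE e he)
  rw [eq_top_iff]
  intro q _
  rw [← hs q]
  exact (hpre ▸ LieSubalgebra.mem_top (s q) : s q ∈ S.comap C.quotientMk)

noncomputable def quotient (hC : C ≤ center F Le.env) (hCE : Disjoint C Le.E)
    (hZ : center F Le.env ≤ C ⊔ Le.E) : PEnvelope F L p where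
  env := Le.env ⧸ C
  finDim := haveI := Le.finDim; inferInstance
  pstruct := Le.pstruct.ofSection C.quotientMk s hs
  E := Le.E.map C.quotientMk
  iso := Le.iso.trans <| LieIdeal.equivMapOfSurjective C.quotientMk_surjective Le.E
    fun x hx hx0 => (Submodule.disjoint_def.mp (LieSubmodule.disjoint_toSubmodule.mpr hCE)) x
      (LieIdeal.quotientMk_eq_zero.mp hx0) hx
  generates := Le.quotient_generates s hs hC hZ

lemma finrank_quotient_lt (hC : C ≤ center F Le.env) (hCE : Disjoint C Le.E)
    (hZ : center F Le.env ≤ C ⊔ Le.E) (hC0 : C ≠ ⊥) :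
    Module.finrank F (Le.quotient s hs hC hCE hZ).env < Module.finrank F Le.env := by
  have := Le.finDim
  have hpos : 0 < Module.finrank F (LieSubmodule.toSubmodule C) := by
    rw [Nat.pos_iff_ne_zero, Ne, Submodule.finrank_eq_zero]
    exact fun h => hC0 ((LieSubmodule.toSubmodule_eq_bot _).mp h)
  have := Submodule.finrank_quotient_add_finrank (LieSubmodule.toSubmodule C)
  change Module.finrank F (Le.env ⧸ LieSubmodule.toSubmodule C) < _
  omega

end Quotient

theorem le_E_of_isAtom (hp : p ≠ 0)
    (hmin : ∀ M : PEnvelope F L p, Module.finrank F Le.env ≤ Module.finrank F M.env)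
    {B : LieIdeal F Le.env} (hB : IsAtom B) : B ≤ Le.E := by
  by_contra hBE
  have hBcenter : B ≤ center F Le.env := fun b hb => by
    rw [LieModule.mem_maxTrivSubmodule]
    intro x
    exact (Submodule.disjoint_def.mp (LieSubmodule.disjoint_toSubmodule.mpr
      (hB.not_le_iff_disjoint.mp hBE))) _ (B.lie_mem hb) (Le.lie_mem_E hp x b)
  obtain ⟨C, hC, hCE, hZ⟩ := Le.E.exists_central_complement
  have hC0 : C ≠ ⊥ := fun h => hBE (hBcenter.trans (by simpa [h] using hZ))
  obtain ⟨s, hs⟩ := (C.quotientMk : Le.env →ₗ[F] Le.env ⧸ C).exists_rightInverse_of_surjective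
    (LinearMap.range_eq_top.mpr C.quotientMk_surjective)
  exact (hmin (Le.quotient s (fun q => LinearMap.congr_fun hs q) hC hCE hZ)).not_gt
    (Le.finrank_quotient_lt s _ hC hCE hZ hC0)

def embedding : L →ₗ⁅F⁆ Le.env := Le.E.incl.comp (Le.iso : L →ₗ⁅F⁆ Le.E)

lemma embedding_injective : Function.Injective Le.embedding :=
  Le.E.incl_injective.comp Le.iso.injective

lemma range_embedding : Set.range Le.embedding = Le.E := by
  ext m
  refine ⟨?_, fun hm => ⟨Le.iso.symm ⟨m, hm⟩, by simp [embedding]⟩⟩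
  rintro ⟨x, rfl⟩
  exact (Le.iso x).2

end PEnvelope

namespace LieHom

variable {F L M : Type} [Field F] [LieRing L] [LieAlgebra F L] [LieRing M] [LieAlgebra F M]
  {E : LieIdeal F M} {g : L →ₗ⁅F⁆ M}

lemma map_le_of_range_eq (hgE : Set.range g = E) (J : Submodule F L) :
    J.map (g : L →ₗ[F] M) ≤ E := by
  rintro _ ⟨x, -, rfl⟩
  exact (hgE ▸ Set.mem_range_self x : g x ∈ (E : Set M))

def comapOrderIso (hg : Function.Injective g) (hgE : Set.range g = E)
    (hideal : ∀ J : Submodule F M, J ≤ E → (∀ x ∈ E, ∀ j ∈ J, ⁅x, j⁆ ∈ J) →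
      ∀ y : M, ∀ j ∈ J, ⁅y, j⁆ ∈ J) :
    Set.Iic E ≃o LieIdeal F L where
  toFun I := LieIdeal.comap g I
  invFun J :=
    ⟨{ toSubmodule := (J : Submodule F L).map (g : L →ₗ[F] M)
       lie_mem := fun {y m} hm => by
         refine hideal _ (map_le_of_range_eq hgE J) (fun x hx j hj => ?_) y m hm
         obtain ⟨x, rfl⟩ : x ∈ Set.range g := hgE ▸ hx
         obtain ⟨j, hj, rfl⟩ := hj
         exact ⟨⁅x, j⁆, J.lie_mem hj, g.map_lie x j⟩ },
      map_le_of_range_eq hgE J⟩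
  left_inv I := by
    refine Subtype.ext (LieSubmodule.ext _ _ fun m => ⟨?_, fun hm => ?_⟩)
    · rintro ⟨x, hx, rfl⟩
      exact hx
    · obtain ⟨x, rfl⟩ : m ∈ Set.range g := hgE ▸ I.2 hm
      exact ⟨x, hm, rfl⟩
  right_inv J := LieSubmodule.ext _ _ fun x =>
    ⟨fun ⟨y, hy, hyx⟩ => hg hyx ▸ hy, fun hx => ⟨x, hx, rfl⟩⟩
  map_rel_iff' {I I'} := by
    refine ⟨fun h m hm => ?_, fun h => LieIdeal.comap_mono h⟩
    obtain ⟨x, rfl⟩ : m ∈ Set.range g := hgE ▸ I.2 hm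
    exact h (show x ∈ LieIdeal.comap g I from hm)

noncomputable def comapLinearEquiv (hg : Function.Injective g) (hgE : Set.range g = E)
    {I : LieIdeal F M} (hI : I ≤ E) : LieIdeal.comap g I ≃ₗ[F] I :=
  LinearEquiv.ofBijective ((g : L →ₗ[F] M).restrict fun _ hx => hx)
    ⟨fun x y h => Subtype.ext (hg (congrArg Subtype.val h)), fun ⟨m, hm⟩ => by
      obtain ⟨x, rfl⟩ : m ∈ Set.range g := hgE ▸ hI hm
      exact ⟨⟨x, hm⟩, rfl⟩⟩

lemma comapLinearEquiv_lie (hg : Function.Injective g) (hgE : Set.range g = E)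
    {I : LieIdeal F M} (hI : I ≤ E) (x : L) (m : LieIdeal.comap g I) :
    comapLinearEquiv hg hgE hI ⁅x, m⁆ = ⁅g x, comapLinearEquiv hg hgE hI m⁆ :=
  Subtype.ext (g.map_lie x m)

noncomputable def comapLieModuleEquiv (hg : Function.Injective g) (hgE : Set.range g = E)
    {I I' : LieIdeal F M} (hI : I ≤ E) (hI' : I' ≤ E) (φ : I ≃ₗ⁅F,M⁆ I') :
    LieIdeal.comap g I ≃ₗ⁅F,L⁆ LieIdeal.comap g I' :=
  let ψ := comapLinearEquiv hg hgE hI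
  let ψ' := comapLinearEquiv hg hgE hI'
  { ψ.trans (φ.toLinearEquiv.trans ψ'.symm) with
    map_lie' := fun {x m} => by
      apply ψ'.injective
      change ψ' (ψ'.symm (φ (ψ ⁅x, m⁆))) = ψ' ⁅x, ψ'.symm (φ (ψ m))⁆
      simp only [ψ, ψ', LinearEquiv.apply_symm_apply, comapLinearEquiv_lie]
      exact (φ : I →ₗ⁅F,M⁆ I').map_lie (g x) _ }

end LieHom

theorem MultiplicityCondition.of_injective {F L M : Type} [Field F] [LieRing L]
    [LieAlgebra F L] [LieRing M] [LieAlgebra F M] (hL : MultiplicityCondition F L)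
    {E : LieIdeal F M} {g : L →ₗ⁅F⁆ M} (hg : Function.Injective g) (hgE : Set.range g = E)
    (hideal : ∀ J : Submodule F M, J ≤ E → (∀ x ∈ E, ∀ j ∈ J, ⁅x, j⁆ ∈ J) →
      ∀ y : M, ∀ j ∈ J, ⁅y, j⁆ ∈ J)
    (hatoms : ∀ B : LieIdeal F M, IsAtom B → B ≤ E) :
    MultiplicityCondition F M := by
  intro r hr A hA habel hindep hiso
  let Φ := g.comapOrderIso hg hgE hideal
  let A' : Fin r → Set.Iic E := fun i => ⟨A i, hatoms _ (hA i)⟩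
  rw [← (g.comapLinearEquiv hg hgE (A' ⟨0, hr⟩).2).finrank_eq]
  refine hL r hr (Φ ∘ A') (fun i => (Φ.isAtom_iff _).mpr ((hA i).Iic _))
    (fun i a ha b hb => hg ?_) ((iSupIndep.of_coe_Iic_comp (t := A') hindep).map_orderIso Φ)
    fun i => ?_
  · rw [g.map_lie, map_zero]
    exact habel i _ ha _ hb
  · obtain ⟨φ⟩ := hiso i
    exact ⟨g.comapLieModuleEquiv hg hgE (A' _).2 (A' i).2 φ⟩

theorem minimal_p_envelope_inherits_multiplicity_condition_general
    {F L : Type} [Field F] [LieRing L] [LieAlgebra F L] {p : ℕ}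
    [Fact p.Prime]
    (hL : MultiplicityCondition F L)
    (Le : PEnvelope F L p)
    (hminimal : ∀ M : PEnvelope F L p, Module.finrank F Le.env ≤ Module.finrank F M.env) :
    (∀ B : LieIdeal F Le.env, IsAtom B → B ≤ Le.E) ∧
    MultiplicityCondition F Le.env := by
  have hatoms : ∀ B : LieIdeal F Le.env, IsAtom B → B ≤ Le.E :=
    fun _ hB => Le.le_E_of_isAtom (Fact.out : p.Prime).ne_zero hminimal hB
  exact ⟨hatoms, hL.of_injective Le.embedding_injective Le.range_embedding
    (fun _ _ hJ => Le.lie_mem_of_forall_lie_mem hJ) hatoms⟩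

/-- Let `L` be a finite-dimensional Lie algebra over an algebraically
closed field of characteristic `p ≠ 0` satisfying the multiplicity condition, and let
`Lᵉ` be a minimal `p`-envelope of `L`.  Then every minimal ideal of `Lᵉ` is contained in
(the copy of) `L`, and `Lᵉ` satisfies the multiplicity condition as well. -/
theorem minimal_p_envelope_inherits_multiplicity_condition
    {F L : Type} [Field F] [IsAlgClosed F] [LieRing L] [LieAlgebra F L] {p : ℕ}
    [Fact p.Prime] [CharP F p] [FiniteDimensional F L]
    (hL : MultiplicityCondition F L)
    (Le : PEnvelope F L p)
    (hminimal : ∀ M : PEnvelope F L p, Module.finrank F Le.env ≤ Module.finrank F M.env) :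
    (∀ B : LieIdeal F Le.env, IsAtom B → B ≤ Le.E) ∧
    MultiplicityCondition F Le.env :=
  minimal_p_envelope_inherits_multiplicity_condition_general hL Le hminimal
end
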